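/- For any continuous function φ : [0,∞) → [0,1) such that φ(0) = 0 and φ(t) > 0 for all t > 0, there exists a continuous non-decreasing surjective function μ : (0,∞) → (−∞,0) such that φ(t) ≤ 2^{μ(t)} for all t > 0. -/

import Mathlib

open Set Real


/-- **Lemma 3.1.** For any continuous `φ : [0,∞) → [0,1)` with `φ(0) = 0` and
`φ(t) > 0` for all `t > 0`, there is a continuous non-decreasing surjective
`μ : (0,∞) → (−∞,0)` such that `φ(t) ≤ 2 ^ μ(t)` for all `t > 0`. -/
theorem exists_mu_of_phi (φ : ℝ → ℝ)
    (hcont : ContinuousOn φ (Set.Ici 0)) (h0 : φ 0 = 0)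
    (hrange : ∀ t, 0 ≤ t → 0 ≤ φ t ∧ φ t < 1)
    (hpos : ∀ t, 0 < t → 0 < φ t) :
    ∃ μ : ℝ → ℝ,
      ContinuousOn μ (Set.Ioi 0) ∧
      MonotoneOn μ (Set.Ioi 0) ∧
      (∀ t, 0 < t → μ t < 0) ∧
      (∀ y : ℝ, y < 0 → ∃ t, 0 < t ∧ μ t = y) ∧
      (∀ t, 0 < t → φ t ≤ (2 : ℝ) ^ (μ t)) := by
  -- running maximum
  set M : ℝ → ℝ := fun t => sSup (φ '' Icc 0 t) with hM
  have hconti : ∀ t : ℝ, 0 ≤ t → ContinuousOn φ (Icc 0 t) :=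
    fun t ht => hcont.mono (Icc_subset_Ici_self)
  have hle : ∀ t : ℝ, 0 ≤ t → φ t ≤ M t := fun t ht =>
    (hconti t ht).le_sSup_image_Icc (by simp [ht])
  have hle0 : ∀ t : ℝ, 0 ≤ t → 0 ≤ M t := fun t ht => by
    have := (hconti t ht).le_sSup_image_Icc (show (0:ℝ) ∈ Icc 0 t by simp [ht])
    rw [h0] at this; exact this
  have hbdd : ∀ t : ℝ, 0 ≤ t → BddAbove (φ '' Icc 0 t) := fun t ht =>
    (isCompact_Icc.image_of_continuousOn (hconti t ht)).bddAbove
  have hmono : ∀ s t : ℝ, 0 ≤ s → s ≤ t → M s ≤ M t := by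
    intro s t hs hst
    exact csSup_le_csSup (hbdd t (hs.trans hst)) ((nonempty_Icc.2 hs).image φ)
      (image_mono (Icc_subset_Icc le_rfl hst))
  have hMlt1 : ∀ t : ℝ, 0 ≤ t → M t < 1 := by
    intro t ht
    have hne : (φ '' Icc 0 t).Nonempty := (nonempty_Icc.2 ht).image φ
    have hmem := (isCompact_Icc.image_of_continuousOn (hconti t ht)).sSup_mem hne
    obtain ⟨s, hs, hst⟩ := hmem
    have heq : M t = φ s := hst.symm
    rw [heq]; exact (hrange s hs.1).2
  -- M is small near zero: ∀ c > 0, ∃ δ > 0, M δ ≤ c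
  have hsmall : ∀ c : ℝ, 0 < c → ∃ δ : ℝ, 0 < δ ∧ M δ ≤ c := by
    intro c hc
    have h0' : ContinuousWithinAt φ (Ici 0) 0 := hcont 0 (by simp)
    have := h0'.tendsto
    rw [Metric.tendsto_nhdsWithin_nhds] at this
    obtain ⟨δ, hδ, hδ'⟩ := this c hc
    refine ⟨δ/2, by positivity, csSup_le ((nonempty_Icc.2 (by positivity)).image φ) ?_⟩
    rintro x ⟨s, ⟨hs0, hsδ⟩, rfl⟩
    have : dist (φ s) (φ 0) < c := hδ' hs0 (by
      rw [Real.dist_eq, sub_zero, abs_of_nonneg hs0]; linarith)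
    rw [h0, Real.dist_eq, sub_zero] at this
    exact le_of_lt (lt_of_le_of_lt (le_abs_self _) this)
  -- continuity of M on Ioi 0
  have hMcont : ContinuousOn M (Ioi 0) := by
    intro a ha
    have ha' : (0:ℝ) < a := ha
    rw [Metric.continuousWithinAt_iff]
    intro ε hε
    have hcpt : IsCompact (Icc (0:ℝ) (a+1)) := isCompact_Icc
    have huc := hcpt.uniformContinuousOn_of_continuous (hconti (a+1) (by linarith))
    rw [Metric.uniformContinuousOn_iff] at huc
    obtain ⟨δ, hδ, hδ'⟩ := huc (ε/2) (by positivity)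
    -- key: for 0 ≤ s ≤ t ≤ a+1 with t - s < δ, M t ≤ M s + ε/2
    have key : ∀ s t : ℝ, 0 ≤ s → s ≤ t → t ≤ a + 1 → t - s < δ → M t ≤ M s + ε/2 := by
      intro s t hs hst hta htsδ
      refine csSup_le ((nonempty_Icc.2 (hs.trans hst)).image φ) ?_
      rintro x ⟨u, ⟨hu0, hut⟩, rfl⟩
      rcases le_or_gt u s with h | h
      · have : φ u ≤ M s := (hconti s hs).le_sSup_image_Icc ⟨hu0, h⟩
        linarith
      · have hd : dist (φ u) (φ s) < ε/2 := by
          apply hδ' u ⟨hu0, hut.trans hta⟩ s ⟨hs, by linarith⟩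
          rw [Real.dist_eq, abs_of_pos (by linarith : (0:ℝ) < u - s)]
          linarith
        have h1 : φ u - φ s < ε/2 :=
          lt_of_le_of_lt (le_trans (le_abs_self _) le_rfl) (by rwa [Real.dist_eq] at hd)
        have h2 : φ s ≤ M s := hle s hs
        linarith
    refine ⟨min (min δ 1) (a/2), lt_min (lt_min hδ one_pos) (by linarith), ?_⟩
    intro t ht hdist
    have ht0 : 0 < t := ht
    have hd := hdist
    rw [Real.dist_eq] at hd
    have h1 : t ≤ a + 1 := by
      have := abs_lt.1 (lt_of_lt_of_le hd (le_trans (min_le_left _ _) (min_le_right _ _)))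
      linarith [this.2]
    have h2 : |t - a| < δ := lt_of_lt_of_le hd (le_trans (min_le_left _ _) (min_le_left _ _))
    rw [Real.dist_eq]
    rcases le_or_gt t a with h | h
    · have hMta : M t ≤ M a := hmono t a ht0.le h
      have : M a ≤ M t + ε/2 := key t a ht0.le h (by linarith) (by
        have := abs_lt.1 h2; linarith [this.1])
      rw [abs_lt]; constructor <;> linarith
    · have hMat : M a ≤ M t := hmono a t (by linarith) h.le
      have : M t ≤ M a + ε/2 := key a t (by linarith [ht0]) h.le h1 (by
        have := abs_lt.1 h2; linarith [this.2])
      rw [abs_lt]; constructor <;> linarith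
  have hdivmono : ∀ s t : ℝ, 0 ≤ s → s ≤ t → s/(1+s) ≤ t/(1+t) := by
    intro s t hs hst
    rw [div_le_div_iff₀ (by linarith) (by linarith)]
    nlinarith
  -- define g and μ
  set g : ℝ → ℝ := fun t => max (M t) (t / (1 + t)) with hg
  have hgpos : ∀ t : ℝ, 0 < t → 0 < g t := fun t ht =>
    lt_of_lt_of_le (by positivity) (le_max_right _ _)
  have hglt1 : ∀ t : ℝ, 0 < t → g t < 1 := by
    intro t ht
    apply max_lt (hMlt1 t ht.le)
    rw [div_lt_one (by linarith)]; linarith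
  have hgmono : MonotoneOn g (Ioi 0) := by
    intro s hs t ht hst
    exact max_le_max (hmono s t (le_of_lt hs) hst) (hdivmono s t (le_of_lt hs) hst)
  have hgcont : ContinuousOn g (Ioi 0) := by
    apply hMcont.sup
    apply ContinuousOn.div continuousOn_id (by fun_prop)
    intro x hx
    have := mem_Ioi.1 hx
    intro h; linarith
  refine ⟨fun t => Real.logb 2 (g t), ?_, ?_, ?_, ?_, ?_⟩
  · -- continuity
    have : ∀ x ∈ Ioi (0:ℝ), g x ≠ 0 := fun x hx => (hgpos x hx).ne'
    simpa [Real.logb] using (hgcont.log this).div_const (Real.log 2)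
  · intro s hs t ht hst
    exact Real.logb_le_logb_of_le (by norm_num) (hgpos s hs) (hgmono hs ht hst)
  · intro t ht
    exact Real.logb_neg (by norm_num) (hgpos t ht) (hglt1 t ht)
  · -- surjectivity
    intro y hy
    set c : ℝ := (2:ℝ) ^ y with hc
    have hc0 : 0 < c := Real.rpow_pos_of_pos (by norm_num) y
    have hc1 : c < 1 := Real.rpow_lt_one_of_one_lt_of_neg (by norm_num) hy
    obtain ⟨δ, hδ, hMδ⟩ := hsmall c hc0
    set t2 : ℝ := c / (1 - c) with ht2
    have h1c : (0:ℝ) < 1 - c := by linarith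
    have ht2pos : 0 < t2 := by positivity
    have ht2val : t2 / (1 + t2) = c := by
      have hne : (1:ℝ) - c ≠ 0 := ne_of_gt h1c
      rw [ht2]
      rw [show 1 + c / (1 - c) = 1 / (1 - c) by field_simp; ring]
      rw [div_div_div_eq]
      field_simp
    set t1 : ℝ := min δ t2 with ht1
    have ht1pos : 0 < t1 := lt_min hδ ht2pos
    have hgt1 : g t1 ≤ c := by
      apply max_le
      · exact le_trans (hmono t1 δ ht1pos.le (min_le_left _ _)) hMδ
      · rw [← ht2val]
        exact hdivmono t1 t2 ht1pos.le (min_le_right _ _)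
    have hgt2 : c ≤ g t2 := le_trans (le_of_eq ht2val.symm) (le_max_right _ _)
    have h12 : t1 ≤ t2 := min_le_right _ _
    have hsub : Icc t1 t2 ⊆ Ioi 0 := fun x hx => lt_of_lt_of_le ht1pos hx.1
    obtain ⟨t, htmem, htval⟩ :=
      intermediate_value_Icc h12 (hgcont.mono hsub) ⟨hgt1, hgt2⟩
    refine ⟨t, lt_of_lt_of_le ht1pos htmem.1, ?_⟩
    show Real.logb 2 (g t) = y
    rw [htval, hc, Real.logb_rpow (by norm_num : (0:ℝ) < 2) (by norm_num)]
  · intro t ht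
    rw [Real.rpow_logb (by norm_num) (by norm_num) (hgpos t ht)]
    exact le_trans (hle t ht.le) (le_max_left _ _)
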